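/- arXiv:2604.18343 — 4 statements merged into one kernel-verified Lean document; each statement's English description precedes it below -/
import Mathlib

section
/- Soundness of the progress-based decomposition (Lemma 1): Let φ be an STL formula in the disjunction-free positive normal form fragment, and let (P_φ, T_φ, Λ_φ) be its recursive progress-based decomposition, with feasible assignment set F_φ consisting of all assignments of nonnegative integers to the variables in Λ_φ that satisfy every interval constraint in T_φ. Then for every signal s : ℕ → ℝ^n, s ⊨ φ (i.e., s_0 ⊨ φ) if and only if there exists an assignment λ⃗ ∈ F_φ such that every progress condition in P_φ, with its symbolic endpoints evaluated under λ⃗, holds on s. In particular, when Λ_φ = ∅, s ⊨ φ if and only if every progress condition in P_φ holds on s. -/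
/-- Until-prefix formulas of the fragment: built only from atomic predicates,
conjunction, and bounded always (no `F` or `U`). Interval bounds satisfy `a ≤ b`. -/
inductive PrefixSTL (n : ℕ) : Type where
  | atom (h : (Fin n → ℝ) → ℝ)
  | conj (φ₁ φ₂ : PrefixSTL n)
  | always (a b : ℕ) (hab : a ≤ b) (φ : PrefixSTL n)

/-- STL formulas of the disjunction-free positive normal form fragment over `ℝ^n`:
atomic predicates, conjunction, bounded eventually, bounded always, and bounded until
whose prefix contains no `F` or `U`. Interval bounds satisfy `a ≤ b`. -/
inductive STL (n : ℕ) : Type where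
  | atom (h : (Fin n → ℝ) → ℝ)
  | conj (φ₁ φ₂ : STL n)
  | ev (a b : ℕ) (hab : a ≤ b) (φ : STL n)
  | always (a b : ℕ) (hab : a ≤ b) (φ : STL n)
  | untl (ψ : PrefixSTL n) (a b : ℕ) (hab : a ≤ b) (φ : STL n)

/-- Boolean semantics of prefix formulas: `PrefixSTL.Sat s ψ t` means `s_t ⊨ ψ`. -/
def PrefixSTL.Sat {n : ℕ} (s : ℕ → Fin n → ℝ) : PrefixSTL n → ℕ → Prop
  | .atom h, t => 0 ≤ h (s t)
  | .conj φ₁ φ₂, t => PrefixSTL.Sat s φ₁ t ∧ PrefixSTL.Sat s φ₂ t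
  | .always a b _ φ, t => ∀ t', t + a ≤ t' → t' ≤ t + b → PrefixSTL.Sat s φ t'

/-- Boolean semantics: `STL.Sat s φ t` means `s_t ⊨ φ`. -/
def STL.Sat {n : ℕ} (s : ℕ → Fin n → ℝ) : STL n → ℕ → Prop
  | .atom h, t => 0 ≤ h (s t)
  | .conj φ₁ φ₂, t => STL.Sat s φ₁ t ∧ STL.Sat s φ₂ t
  | .ev a b _ φ, t => ∃ t', t + a ≤ t' ∧ t' ≤ t + b ∧ STL.Sat s φ t'
  | .always a b _ φ, t => ∀ t', t + a ≤ t' → t' ≤ t + b → STL.Sat s φ t'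
  | .untl ψ a b _ φ, t => ∃ t', t + a ≤ t' ∧ t' ≤ t + b ∧ STL.Sat s φ t' ∧
      ∀ t'', t ≤ t'' → t'' ≤ t' → PrefixSTL.Sat s ψ t''

/-- A symbolic progress condition over `nv` time variables: a kind flag
(`reach = true` for reachability `R`, `reach = false` for invariance `I`),
symbolic interval endpoints evaluated on assignments of the time variables,
and the evaluation function of the atomic predicate. -/
structure ProgCond (n nv : ℕ) : Type where
  reach : Bool
  lo : (Fin nv → ℕ) → ℕ
  hi : (Fin nv → ℕ) → ℕ
  pred : (Fin n → ℝ) → ℝ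

/-- Satisfaction of a progress condition on the signal `s` under the
time-variable assignment `lam`. -/
def ProgCond.Holds {n nv : ℕ} (c : ProgCond n nv) (lam : Fin nv → ℕ)
    (s : ℕ → Fin n → ℝ) : Prop :=
  if c.reach then ∃ t, c.lo lam ≤ t ∧ t ≤ c.hi lam ∧ 0 ≤ c.pred (s t)
  else ∀ t, c.lo lam ≤ t → t ≤ c.hi lam → 0 ≤ c.pred (s t)

/-- Reindex the time variables of a progress condition. -/
def ProgCond.comap {n nv nv' : ℕ} (c : ProgCond n nv)
    (f : (Fin nv' → ℕ) → Fin nv → ℕ) : ProgCond n nv' :=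
  ⟨c.reach, fun lam => c.lo (f lam), fun lam => c.hi (f lam), c.pred⟩

/-- Shift both endpoints of a progress condition by `k`. -/
def ProgCond.shiftBy {n nv : ℕ} (c : ProgCond n nv) (k : (Fin nv → ℕ) → ℕ) :
    ProgCond n nv :=
  ⟨c.reach, fun lam => c.lo lam + k lam, fun lam => c.hi lam + k lam, c.pred⟩

/-- A decomposition triple `(ℙ_φ, 𝕋_φ, Λ_φ)`: `nv` time variables, one interval
constraint per variable, and a finite list of symbolic progress conditions. -/
structure Decomp (n : ℕ) : Type where
  nv : ℕ
  constr : Fin nv → ℕ × ℕ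
  conds : List (ProgCond n nv)

/-- Feasible assignments: nonnegative integer assignments of the time variables
satisfying every interval constraint. -/
def Decomp.Feasible {n : ℕ} (D : Decomp n) (lam : Fin D.nv → ℕ) : Prop :=
  ∀ v, (D.constr v).1 ≤ lam v ∧ lam v ≤ (D.constr v).2

/-- Decomposition of an (F/U-free) until-prefix formula into invariance
conditions with constant endpoints `(c, d, h_μ)`. -/
def pdecomp {n : ℕ} : PrefixSTL n → List (ℕ × ℕ × ((Fin n → ℝ) → ℝ))
  | .atom h => [(0, 0, h)]
  | .conj φ₁ φ₂ => pdecomp φ₁ ++ pdecomp φ₂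
  | .always a b _ (.atom h) => [(a, b, h)]
  | .always a b _ φ =>
      (List.range (b + 1 - a)).flatMap fun k =>
        (pdecomp φ).map fun c => (c.1 + (a + k), c.2.1 + (a + k), c.2.2)

/-- The recursive progress-based decomposition `(ℙ_φ, 𝕋_φ, Λ_φ)` of an STL formula. -/
def decomp {n : ℕ} : STL n → Decomp n
  | .atom h => ⟨0, Fin.elim0, [⟨true, fun _ => 0, fun _ => 0, h⟩]⟩
  | .conj φ₁ φ₂ =>
      let D₁ := decomp φ₁
      let D₂ := decomp φ₂
      ⟨D₁.nv + D₂.nv,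
        fun v => Fin.addCases (motive := fun _ => ℕ × ℕ) D₁.constr D₂.constr v,
        (D₁.conds.map fun c => c.comap fun lam i => lam (Fin.castAdd D₂.nv i)) ++
        (D₂.conds.map fun c => c.comap fun lam i => lam (Fin.natAdd D₁.nv i))⟩
  | .ev a b _ φ =>
      let D := decomp φ
      ⟨D.nv + 1,
        Fin.snoc D.constr (a, b),
        D.conds.map fun c =>
          (c.comap fun lam i => lam i.castSucc).shiftBy fun lam => lam (Fin.last D.nv)⟩
  | .always a b _ (.atom h) =>
      ⟨0, Fin.elim0, [⟨false, fun _ => a, fun _ => b, h⟩]⟩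
  | .always a b _ φ =>
      let D := decomp φ
      ⟨(b + 1 - a) * D.nv,
        fun v => D.constr (finProdFinEquiv.symm v).2,
        (List.finRange (b + 1 - a)).flatMap fun k =>
          D.conds.map fun c =>
            (c.comap fun lam i => lam (finProdFinEquiv (k, i))).shiftBy
              fun _ => a + (k : ℕ)⟩
  | .untl ψ a b _ φ =>
      let D := decomp φ
      ⟨D.nv + 1,
        Fin.snoc D.constr (a, b),
        (D.conds.map fun c =>
          (c.comap fun lam i => lam i.castSucc).shiftBy fun lam => lam (Fin.last D.nv)) ++
        ((pdecomp ψ).map fun c =>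
          ⟨false, fun _ => c.1, fun lam => c.2.1 + lam (Fin.last D.nv), c.2.2⟩)⟩

/-!
The decomposition is sound at every time `t`, not only at `0`, and this stronger statement goes
through by induction on the formula, each clause of the decomposition mirroring a semantic clause.
A bounded `F` or `U` becomes a fresh variable ranging over `[a, b]` that records the witness time,
by which all conditions of the body are shifted. A conjunction, and a bounded `G` unrolled over its
finitely many instants, use disjoint copies of the variables, so one feasible assignment is the same
as a family of independent ones (by choice). The only non-local step is the until prefix: its
invariants `I(c, d)` holding at every `t'' ∈ [t, t + λ]` amount to `I(c, d + λ)` at `t`, because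
`c ≤ d` makes the windows `[t'' + c, t'' + d]` cover `[t + c, t + λ + d]`.
-/

namespace ProgCond

variable {n nv : ℕ}

/-- Satisfaction of `c` on the suffix signal `s_t`. -/
def HoldsAt (c : ProgCond n nv) (lam : Fin nv → ℕ) (s : ℕ → Fin n → ℝ) (t : ℕ) : Prop :=
  if c.reach then ∃ u, t + c.lo lam ≤ u ∧ u ≤ t + c.hi lam ∧ 0 ≤ c.pred (s u)
  else ∀ u, t + c.lo lam ≤ u → u ≤ t + c.hi lam → 0 ≤ c.pred (s u)

theorem holdsAt_zero (c : ProgCond n nv) (lam : Fin nv → ℕ) (s : ℕ → Fin n → ℝ) :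
    c.HoldsAt lam s 0 ↔ c.Holds lam s := by
  simp only [HoldsAt, Holds, Nat.zero_add]

theorem holdsAt_comap {nv' : ℕ} (c : ProgCond n nv) (f : (Fin nv' → ℕ) → Fin nv → ℕ)
    (lam : Fin nv' → ℕ) (s : ℕ → Fin n → ℝ) (t : ℕ) :
    (c.comap f).HoldsAt lam s t ↔ c.HoldsAt (f lam) s t :=
  Iff.rfl

theorem holdsAt_shiftBy (c : ProgCond n nv) (k : (Fin nv → ℕ) → ℕ) (lam : Fin nv → ℕ)
    (s : ℕ → Fin n → ℝ) (t : ℕ) :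
    (c.shiftBy k).HoldsAt lam s t ↔ c.HoldsAt lam s (t + k lam) := by
  obtain ⟨_ | _, lo, hi, p⟩ := c <;>
    simp only [HoldsAt, shiftBy, Nat.add_assoc, Nat.add_comm (k lam), Bool.false_eq_true, if_true,
      if_false]

theorem holdsAt_reach (lo hi : (Fin nv → ℕ) → ℕ) (p : (Fin n → ℝ) → ℝ) (lam : Fin nv → ℕ)
    (s : ℕ → Fin n → ℝ) (t : ℕ) :
    (ProgCond.mk true lo hi p).HoldsAt lam s t ↔
      ∃ u, t + lo lam ≤ u ∧ u ≤ t + hi lam ∧ 0 ≤ p (s u) :=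
  Iff.rfl

end ProgCond

theorem exists_comp_finProdFinEquiv_iff {m k : ℕ} {α : Type*} (P : (Fin m → Fin k → α) → Prop) :
    (∃ lam : Fin (m * k) → α, P fun j i => lam (finProdFinEquiv (j, i))) ↔ ∃ L, P L :=
  ⟨fun ⟨_, h⟩ => ⟨_, h⟩, fun ⟨L, h⟩ =>
    ⟨fun v => L (finProdFinEquiv.symm v).1 (finProdFinEquiv.symm v).2, by simpa using h⟩⟩

theorem forall_lt_shift_iff (P : ℕ → Prop) (t a b : ℕ) :
    (∀ k < b + 1 - a, P (t + (a + k))) ↔ ∀ t', t + a ≤ t' → t' ≤ t + b → P t' := by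
  refine ⟨fun h t' h₁ h₂ => ?_, fun h k hk => h _ (by omega) (by omega)⟩
  simpa [show t + (a + (t' - (t + a))) = t' by omega] using h (t' - (t + a)) (by omega)

namespace Decomp

variable {n : ℕ}

def SatAt (D : Decomp n) (s : ℕ → Fin n → ℝ) (t : ℕ) : Prop :=
  ∃ lam, D.Feasible lam ∧ ∀ c ∈ D.conds, c.HoldsAt lam s t

theorem exists_feasible_iff_forall_of_nv_eq_zero (D : Decomp n) (h : D.nv = 0)
    (P : (Fin D.nv → ℕ) → Prop) : (∃ lam, D.Feasible lam ∧ P lam) ↔ ∀ lam, P lam := by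
  obtain ⟨nv, constr, conds⟩ := D
  subst h
  simp [Feasible, Unique.forall_iff, Unique.exists_iff]

theorem satAt_singleton (constr : Fin 0 → ℕ × ℕ) (c : ProgCond n 0) (s : ℕ → Fin n → ℝ)
    (t : ℕ) : (Decomp.mk 0 constr [c]).SatAt s t ↔ c.HoldsAt Fin.elim0 s t := by
  rw [SatAt, exists_feasible_iff_forall_of_nv_eq_zero _ rfl]
  simp only [List.forall_mem_singleton, Unique.forall_iff]
  rfl

def conj (D₁ D₂ : Decomp n) : Decomp n :=
  ⟨D₁.nv + D₂.nv, Fin.append D₁.constr D₂.constr,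
    (D₁.conds.map fun c => c.comap fun lam i => lam (Fin.castAdd D₂.nv i)) ++
    (D₂.conds.map fun c => c.comap fun lam i => lam (Fin.natAdd D₁.nv i))⟩

theorem satAt_conj (D₁ D₂ : Decomp n) (s : ℕ → Fin n → ℝ) (t : ℕ) :
    (D₁.conj D₂).SatAt s t ↔ D₁.SatAt s t ∧ D₂.SatAt s t := by
  constructor
  · rintro ⟨lam, hlam, hconds⟩
    refine ⟨⟨fun i => lam (Fin.castAdd _ i), fun i => by simpa [conj] using hlam (Fin.castAdd _ i),
      fun c hc => ?_⟩, ⟨fun i => lam (Fin.natAdd _ i),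
      fun i => by simpa [conj] using hlam (Fin.natAdd _ i), fun c hc => ?_⟩⟩
    · exact hconds _ (List.mem_append_left _ (List.mem_map_of_mem hc))
    · exact hconds _ (List.mem_append_right _ (List.mem_map_of_mem hc))
  · rintro ⟨⟨lam₁, hlam₁, hconds₁⟩, ⟨lam₂, hlam₂, hconds₂⟩⟩
    refine ⟨Fin.append lam₁ lam₂, Fin.addCases (by simpa [conj, Feasible] using hlam₁)
      (by simpa [conj, Feasible] using hlam₂), List.forall_mem_append.2
        ⟨List.forall_mem_map.2 fun c hc => ?_, List.forall_mem_map.2 fun c hc => ?_⟩⟩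
    · exact (c.holdsAt_comap _ _ s t).2 (by simpa using hconds₁ c hc)
    · exact (c.holdsAt_comap _ _ s t).2 (by simpa using hconds₂ c hc)

def ev (a b : ℕ) (D : Decomp n) : Decomp n :=
  ⟨D.nv + 1, Fin.snoc D.constr (a, b),
    D.conds.map fun c =>
      (c.comap fun lam i => lam i.castSucc).shiftBy fun lam => lam (Fin.last D.nv)⟩

def untl (l : List (ℕ × ℕ × ((Fin n → ℝ) → ℝ))) (a b : ℕ) (D : Decomp n) : Decomp n :=
  ⟨D.nv + 1, Fin.snoc D.constr (a, b),
    (D.ev a b).conds ++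
      l.map fun c => ⟨false, fun _ => c.1, fun lam => c.2.1 + lam (Fin.last D.nv), c.2.2⟩⟩

theorem untl_nil (a b : ℕ) (D : Decomp n) : D.untl [] a b = D.ev a b :=
  congrArg (Decomp.mk _ _) (List.append_nil _)

theorem feasible_untl_iff (l : List (ℕ × ℕ × ((Fin n → ℝ) → ℝ))) (a b : ℕ) (D : Decomp n)
    (lam : Fin (D.nv + 1) → ℕ) :
    (D.untl l a b).Feasible lam ↔
      D.Feasible (Fin.init lam) ∧ a ≤ lam (Fin.last D.nv) ∧ lam (Fin.last D.nv) ≤ b := by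
  simp [Feasible, untl, Fin.forall_fin_succ', Fin.init]

theorem forall_mem_untl_conds_iff (l : List (ℕ × ℕ × ((Fin n → ℝ) → ℝ))) (a b : ℕ)
    (D : Decomp n) (lam : Fin (D.nv + 1) → ℕ) (s : ℕ → Fin n → ℝ) (t : ℕ) :
    (∀ c ∈ (D.untl l a b).conds, c.HoldsAt lam s t) ↔
      (∀ c ∈ D.conds, c.HoldsAt (Fin.init lam) s (t + lam (Fin.last D.nv))) ∧
      ∀ c ∈ l, ∀ u, t + c.1 ≤ u → u ≤ t + (c.2.1 + lam (Fin.last D.nv)) → 0 ≤ c.2.2 (s u) := by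
  refine List.forall_mem_append.trans (and_congr ?_ List.forall_mem_map)
  exact List.forall_mem_map.trans (forall₂_congr fun c _ => (c.comap _).holdsAt_shiftBy _ lam s t)

theorem satAt_untl (l : List (ℕ × ℕ × ((Fin n → ℝ) → ℝ))) (a b : ℕ) (D : Decomp n)
    (s : ℕ → Fin n → ℝ) (t : ℕ) :
    (D.untl l a b).SatAt s t ↔ ∃ t', t + a ≤ t' ∧ t' ≤ t + b ∧ D.SatAt s t' ∧
      ∀ c ∈ l, ∀ u, t + c.1 ≤ u → u ≤ t' + c.2.1 → 0 ≤ c.2.2 (s u) := by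
  constructor
  · rintro ⟨lam, hlam, hconds⟩
    obtain ⟨hinit, ha, hb⟩ := (feasible_untl_iff l a b D lam).1 hlam
    obtain ⟨hD, hl⟩ := (forall_mem_untl_conds_iff l a b D lam s t).1 hconds
    exact ⟨t + lam (Fin.last D.nv), by omega, by omega, ⟨_, hinit, hD⟩,
      fun c hc u h₁ h₂ => hl c hc u h₁ (by omega)⟩
  · rintro ⟨t', ha, hb, ⟨lam, hlam, hD⟩, hl⟩
    have ht' : t + (t' - t) = t' := by omega
    refine ⟨Fin.snoc (α := fun _ => ℕ) lam (t' - t),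
      (feasible_untl_iff l a b D _).2 ⟨by simpa, by simp only [Fin.snoc_last]; omega,
        by simp only [Fin.snoc_last]; omega⟩,
      (forall_mem_untl_conds_iff l a b D _ s t).2 ⟨by simpa [ht'],
        fun c hc u h₁ h₂ => hl c hc u h₁ (by simp only [Fin.snoc_last] at h₂; omega)⟩⟩

theorem satAt_ev (a b : ℕ) (D : Decomp n) (s : ℕ → Fin n → ℝ) (t : ℕ) :
    (D.ev a b).SatAt s t ↔ ∃ t', t + a ≤ t' ∧ t' ≤ t + b ∧ D.SatAt s t' := by
  simpa [untl_nil] using satAt_untl [] a b D s t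

def always (a b : ℕ) (D : Decomp n) : Decomp n :=
  ⟨(b + 1 - a) * D.nv, fun v => D.constr (finProdFinEquiv.symm v).2,
    (List.finRange (b + 1 - a)).flatMap fun k =>
      D.conds.map fun c =>
        (c.comap fun lam i => lam (finProdFinEquiv (k, i))).shiftBy fun _ => a + (k : ℕ)⟩

theorem feasible_always_iff (a b : ℕ) (D : Decomp n) (lam : Fin ((b + 1 - a) * D.nv) → ℕ) :
    (D.always a b).Feasible lam ↔ ∀ k, D.Feasible fun i => lam (finProdFinEquiv (k, i)) :=
  ⟨fun h k i => by simpa [always] using h (finProdFinEquiv (k, i)),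
    fun h v => by
      obtain ⟨⟨k, i⟩, rfl⟩ := finProdFinEquiv.surjective v
      simpa [always] using h k i⟩

theorem forall_mem_always_conds_iff (a b : ℕ) (D : Decomp n) (lam : Fin ((b + 1 - a) * D.nv) → ℕ)
    (s : ℕ → Fin n → ℝ) (t : ℕ) :
    (∀ c ∈ (D.always a b).conds, c.HoldsAt lam s t) ↔
      ∀ k : Fin (b + 1 - a), ∀ c ∈ D.conds,
        c.HoldsAt (fun i => lam (finProdFinEquiv (k, i))) s (t + (a + k)) := by
  refine List.forall_mem_flatMap.trans (forall_congr' fun k => ?_)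
  refine (imp_iff_right (List.mem_finRange k)).trans
    (List.forall_mem_map.trans (forall₂_congr fun c _ => ?_))
  exact (c.comap _).holdsAt_shiftBy _ lam s t

theorem satAt_always (a b : ℕ) (D : Decomp n) (s : ℕ → Fin n → ℝ) (t : ℕ) :
    (D.always a b).SatAt s t ↔ ∀ t', t + a ≤ t' → t' ≤ t + b → D.SatAt s t' :=
  calc (D.always a b).SatAt s t
      ↔ ∃ lam : Fin ((b + 1 - a) * D.nv) → ℕ, ∀ k : Fin (b + 1 - a),
          D.Feasible (fun i => lam (finProdFinEquiv (k, i))) ∧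
          ∀ c ∈ D.conds, c.HoldsAt (fun i => lam (finProdFinEquiv (k, i))) s (t + (a + k)) :=
        exists_congr fun lam => (and_congr (feasible_always_iff a b D lam)
          (forall_mem_always_conds_iff a b D lam s t)).trans forall_and.symm
    _ ↔ ∃ L : Fin (b + 1 - a) → Fin D.nv → ℕ, ∀ k : Fin (b + 1 - a),
          D.Feasible (L k) ∧ ∀ c ∈ D.conds, c.HoldsAt (L k) s (t + (a + k)) :=
        exists_comp_finProdFinEquiv_iff fun L => ∀ k : Fin (b + 1 - a),
          D.Feasible (L k) ∧ ∀ c ∈ D.conds, c.HoldsAt (L k) s (t + (a + k))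
    _ ↔ ∀ k : Fin (b + 1 - a), D.SatAt s (t + (a + k)) := by
      simp only [SatAt, Classical.skolem]
    _ ↔ ∀ t', t + a ≤ t' → t' ≤ t + b → D.SatAt s t' :=
      Fin.forall_iff.trans (forall_lt_shift_iff _ t a b)

end Decomp

section Prefix

variable {n : ℕ}

def InvHoldsAt (l : List (ℕ × ℕ × ((Fin n → ℝ) → ℝ))) (s : ℕ → Fin n → ℝ) (t : ℕ) : Prop :=
  ∀ c ∈ l, ∀ u, t + c.1 ≤ u → u ≤ t + c.2.1 → 0 ≤ c.2.2 (s u)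

theorem invHoldsAt_append (l₁ l₂ : List (ℕ × ℕ × ((Fin n → ℝ) → ℝ))) (s : ℕ → Fin n → ℝ)
    (t : ℕ) : InvHoldsAt (l₁ ++ l₂) s t ↔ InvHoldsAt l₁ s t ∧ InvHoldsAt l₂ s t :=
  List.forall_mem_append

theorem invHoldsAt_map_shift (l : List (ℕ × ℕ × ((Fin n → ℝ) → ℝ))) (k : ℕ)
    (s : ℕ → Fin n → ℝ) (t : ℕ) :
    InvHoldsAt (l.map fun c => (c.1 + k, c.2.1 + k, c.2.2)) s t ↔ InvHoldsAt l s (t + k) := by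
  simp only [InvHoldsAt, List.forall_mem_map, ← Nat.add_assoc, Nat.add_right_comm t _ k]

theorem invHoldsAt_flatMap_range (l : List (ℕ × ℕ × ((Fin n → ℝ) → ℝ))) (a b : ℕ)
    (s : ℕ → Fin n → ℝ) (t : ℕ) :
    InvHoldsAt ((List.range (b + 1 - a)).flatMap fun k =>
        l.map fun c => (c.1 + (a + k), c.2.1 + (a + k), c.2.2)) s t ↔
      ∀ t', t + a ≤ t' → t' ≤ t + b → InvHoldsAt l s t' :=
  calc _ ↔ ∀ k < b + 1 - a, InvHoldsAt l s (t + (a + k)) := by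
        simp only [← invHoldsAt_map_shift, ← List.mem_range]
        exact List.forall_mem_flatMap
    _ ↔ _ := forall_lt_shift_iff _ t a b

theorem forall_between_invHoldsAt_iff {l : List (ℕ × ℕ × ((Fin n → ℝ) → ℝ))}
    (hl : ∀ c ∈ l, c.1 ≤ c.2.1) (s : ℕ → Fin n → ℝ) {t t' : ℕ} (htt' : t ≤ t') :
    (∀ t'', t ≤ t'' → t'' ≤ t' → InvHoldsAt l s t'') ↔
      ∀ c ∈ l, ∀ u, t + c.1 ≤ u → u ≤ t' + c.2.1 → 0 ≤ c.2.2 (s u) := by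
  refine ⟨fun h c hc u hu₁ hu₂ => ?_,
    fun h t'' h₁ h₂ c hc u hu₁ hu₂ => h c hc u (by omega) (by omega)⟩
  have := hl c hc
  -- `u` lies in the window `[t'' + c.1, t'' + c.2.1]` of `t'' = max t (u - c.2.1)`
  exact h (max t (u - c.2.1)) (le_max_left _ _) (by omega) c hc u (by omega) (by omega)

theorem pdecomp_always_of_ne_atom {a b : ℕ} (hab : a ≤ b) {ψ : PrefixSTL n}
    (hψ : ∀ h, ψ ≠ .atom h) :
    pdecomp (.always a b hab ψ) = (List.range (b + 1 - a)).flatMap fun k =>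
      (pdecomp ψ).map fun c => (c.1 + (a + k), c.2.1 + (a + k), c.2.2) :=
  pdecomp.eq_4 a b hab ψ hψ

theorem fst_le_of_mem_pdecomp (ψ : PrefixSTL n) : ∀ c ∈ pdecomp ψ, c.1 ≤ c.2.1 := by
  induction ψ with
  | atom h => simp [pdecomp]
  | conj ψ₁ ψ₂ ih₁ ih₂ => exact List.forall_mem_append.2 ⟨ih₁, ih₂⟩
  | always a b hab ψ ih =>
    by_cases hψ : ∃ h, ψ = .atom h
    · obtain ⟨h, rfl⟩ := hψ
      simpa [pdecomp] using hab
    · push Not at hψ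
      rw [pdecomp_always_of_ne_atom hab hψ]
      simp only [List.forall_mem_flatMap, List.forall_mem_map]
      intro k _ c hc
      have := ih c hc
      omega

theorem sat_iff_invHoldsAt_pdecomp (ψ : PrefixSTL n) (s : ℕ → Fin n → ℝ) (t : ℕ) :
    PrefixSTL.Sat s ψ t ↔ InvHoldsAt (pdecomp ψ) s t := by
  induction ψ generalizing t with
  | atom h =>
    simp only [PrefixSTL.Sat, pdecomp, InvHoldsAt, List.forall_mem_singleton, Nat.add_zero]
    exact ⟨fun hh u h₁ h₂ => le_antisymm h₂ h₁ ▸ hh, fun hh => hh t le_rfl le_rfl⟩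
  | conj ψ₁ ψ₂ ih₁ ih₂ => simp only [PrefixSTL.Sat, pdecomp, invHoldsAt_append, ih₁, ih₂]
  | always a b hab ψ ih =>
    by_cases hψ : ∃ h, ψ = .atom h
    · obtain ⟨h, rfl⟩ := hψ
      simp [PrefixSTL.Sat, pdecomp, InvHoldsAt]
    · push Not at hψ
      rw [pdecomp_always_of_ne_atom hab hψ, invHoldsAt_flatMap_range]
      simp only [PrefixSTL.Sat, ih]

end Prefix

section Decomposition

variable {n : ℕ}

theorem decomp_conj (φ₁ φ₂ : STL n) : decomp (.conj φ₁ φ₂) = (decomp φ₁).conj (decomp φ₂) :=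
  rfl

theorem decomp_ev {a b : ℕ} (hab : a ≤ b) (φ : STL n) :
    decomp (.ev a b hab φ) = (decomp φ).ev a b :=
  rfl

theorem decomp_always_of_ne_atom {a b : ℕ} (hab : a ≤ b) {φ : STL n} (hφ : ∀ h, φ ≠ .atom h) :
    decomp (.always a b hab φ) = (decomp φ).always a b :=
  decomp.eq_5 a b hab φ hφ

theorem decomp_untl (ψ : PrefixSTL n) {a b : ℕ} (hab : a ≤ b) (φ : STL n) :
    decomp (.untl ψ a b hab φ) = (decomp φ).untl (pdecomp ψ) a b :=
  rfl

theorem sat_iff_satAt_decomp (φ : STL n) (s : ℕ → Fin n → ℝ) (t : ℕ) :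
    STL.Sat s φ t ↔ (decomp φ).SatAt s t := by
  induction φ generalizing t with
  | atom h =>
    rw [decomp, Decomp.satAt_singleton, ProgCond.holdsAt_reach, STL.Sat]
    exact ⟨fun hh => ⟨t, le_rfl, le_rfl, hh⟩, fun ⟨u, h₁, h₂, hh⟩ =>
      (le_antisymm h₂ h₁ : u = t) ▸ hh⟩
  | conj φ₁ φ₂ ih₁ ih₂ => rw [decomp_conj, Decomp.satAt_conj, ← ih₁, ← ih₂, STL.Sat]
  | ev a b hab φ ih => simp only [STL.Sat, decomp_ev, Decomp.satAt_ev, ih]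
  | always a b hab φ ih =>
    by_cases hφ : ∃ h, φ = .atom h
    · obtain ⟨h, rfl⟩ := hφ
      rw [decomp, Decomp.satAt_singleton]
      rfl
    · push Not at hφ
      simp only [STL.Sat, decomp_always_of_ne_atom hab hφ, Decomp.satAt_always, ih]
  | untl ψ a b hab φ ih =>
    simp only [STL.Sat, decomp_untl, Decomp.satAt_untl, ih, sat_iff_invHoldsAt_pdecomp]
    refine exists_congr fun t' => and_congr_right fun ha => and_congr_right fun _ =>
      and_congr_right fun _ => ?_
    exact forall_between_invHoldsAt_iff (fst_le_of_mem_pdecomp ψ) s (by omega)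

end Decomposition

/-- **Soundness of the progress-based decomposition (Lemma 1).**
For every signal `s : ℕ → ℝ^n`, `s ⊨ φ` iff there is a feasible assignment of the
time variables under which every progress condition of the decomposition holds on `s`.
In particular, when the variable set is empty, `s ⊨ φ` iff every progress condition
holds on `s`. -/
theorem progress_decomposition_sound {n : ℕ} (φ : STL n) (s : ℕ → Fin n → ℝ) :
    (STL.Sat s φ 0 ↔
      ∃ lam : Fin (decomp φ).nv → ℕ, (decomp φ).Feasible lam ∧
        ∀ c ∈ (decomp φ).conds, c.Holds lam s) ∧
    ((decomp φ).nv = 0 →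
      (STL.Sat s φ 0 ↔
        ∀ lam : Fin (decomp φ).nv → ℕ, ∀ c ∈ (decomp φ).conds, c.Holds lam s)) := by
  have hsat : STL.Sat s φ 0 ↔
      ∃ lam, (decomp φ).Feasible lam ∧ ∀ c ∈ (decomp φ).conds, c.Holds lam s := by
    simp only [sat_iff_satAt_decomp, Decomp.SatAt, ProgCond.holdsAt_zero]
  exact ⟨hsat, fun h => hsat.trans ((decomp φ).exists_feasible_iff_forall_of_nv_eq_zero h _)⟩
end

section
/- Soundness of progress allocation (Lemma 2, stated via its constraint certificates): Let P^R be a finite set of reachability progress conditions and P^I a finite set of invariance progress conditions, each with symbolic endpoint functions a_Λ, b_Λ mapping assignments λ⃗ ∈ ℕ^N of N time variables to natural numbers. Let (x̃_0,t_0), …, (x̃_n,t_n) be timed waypoints with 0 = t_0 ≤ t_1 ≤ … ≤ t_n, together with a map assigning to each reachability condition R(a_Λ,b_Λ,μ) ∈ P^R a waypoint index i(R) such that h_μ(x̃_{i(R)}) ≥ 0. Suppose λ⃗ ∈ ℕ^N is an assignment satisfying: (I2) for every R(a_Λ,b_Λ,μ) ∈ P^R, a_Λ(λ⃗) ≤ t_{i(R)}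 ≤ b_Λ(λ⃗); and (I3) for every invariance condition I(a_Λ,b_Λ,μ') ∈ P^I and every waypoint index j with h_{μ'}(x̃_j) < 0, b_Λ(λ⃗) < t_j. Then for every signal s : ℕ → ℝ^n with s(t_i) = x̃_i for all i ∈ {0,…,n}: (a) every reachability condition R(a_Λ,b_Λ,μ) ∈ P^R, evaluated under λ⃗, holds on s, i.e., there exists t ∈ [a_Λ(λ⃗), b_Λ(λ⃗)] with h_μ(s t) ≥ 0; and (b) for every invariance condition I(a_Λ,b_Λ,μ') ∈ P^I and every waypoint time t_j with a_Λ(λ⃗) ≤ t_j ≤ b_Λ(λ⃗), h_{μ'}(s(t_j)) ≥ 0. -/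
/-- **Soundness of progress allocation (Lemma 2), via its constraint certificates.**
`ιR` indexes a finite set of reachability progress conditions and `ιI` a finite set of
invariance progress conditions, each with symbolic endpoints `aR r, bR r` (resp.
`aI i, bI i`) mapping assignments `ℕ^N → ℕ` and predicate evaluation functions
`hR r` (resp. `hI i`). Given timed waypoints `(wx 0, wt 0), …, (wx m, wt m)` with
`wt 0 = 0` and nondecreasing times, an index map `idx` assigning each reachability
condition a satisfying waypoint, and an assignment `lam` satisfying certificates (I2)
and (I3), every signal passing through the waypoints at their times (a) witnesses each
reachability condition evaluated under `lam`, and (b) satisfies each invariance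
condition's predicate at every waypoint time inside its evaluated active interval. -/
theorem progress_allocation_sound
    {n N m : ℕ} {ιR ιI : Type} [Fintype ιR] [Fintype ιI]
    (aR bR : ιR → (Fin N → ℕ) → ℕ) (hR : ιR → (Fin n → ℝ) → ℝ)
    (aI bI : ιI → (Fin N → ℕ) → ℕ) (hI : ιI → (Fin n → ℝ) → ℝ)
    (wx : Fin (m + 1) → Fin n → ℝ) (wt : Fin (m + 1) → ℕ)
    (hwt0 : wt 0 = 0) (hmono : Monotone wt)
    (idx : ιR → Fin (m + 1)) (hidx : ∀ r, 0 ≤ hR r (wx (idx r)))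
    (lam : Fin N → ℕ)
    (hI2 : ∀ r, aR r lam ≤ wt (idx r) ∧ wt (idx r) ≤ bR r lam)
    (hI3 : ∀ i, ∀ j : Fin (m + 1), hI i (wx j) < 0 → bI i lam < wt j) :
    ∀ s : ℕ → Fin n → ℝ, (∀ i : Fin (m + 1), s (wt i) = wx i) →
      (∀ r, ∃ t, aR r lam ≤ t ∧ t ≤ bR r lam ∧ 0 ≤ hR r (s t)) ∧
      (∀ i, ∀ j : Fin (m + 1), aI i lam ≤ wt j → wt j ≤ bI i lam →
        0 ≤ hI i (s (wt j))) := by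
  intro s hs
  constructor
  · intro r
    exact ⟨wt (idx r), (hI2 r).1, (hI2 r).2, by rw [hs (idx r)]; exact hidx r⟩
  · intro i j _ hb
    rw [hs j]
    by_contra h
    exact absurd hb (not_le.2 (hI3 i j (not_le.1 h)))
end

section
/- Inductive step for an outer always operator: Let s : ℕ → ℝ^n be a signal and φ an STL formula of the disjunction-free positive normal form fragment. Let J be a finite index set and F a set of assignments; for each j ∈ J let κ_j ∈ {reach, inv}, a_j, b_j : F → ℕ with a_j(λ) ≤ b_j(λ) for all λ ∈ F, and h_j : ℝ^n → ℝ. Say condition j holds at shift k ∈ ℕ under λ ∈ F on s if either κ_j = reach and there exists t ∈ [a_j(λ)+k, b_j(λ)+k] with h_j(s t) ≥ 0, or κ_j = inv and for every t ∈ [a_j(λ)+k, b_j(λ)+k], h_j(s t) ≥ 0. Suppose that for every k ∈ ℕ: the suffix signal s_k satisfies φ if and only if there exists λ ∈ F such that every condition j ∈ J holds at shift k under λ on s. Then for all natural numbers a ≤ b: s_0 ⊨ G_{[a,b]} φ if and only if there exists a function σ : [a,b] → F such that for every k ∈ [a,b] and every j ∈ J, condition j holds at shift k under σ(k) on s. 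-/
/-- A single (reachability or invariance) condition on the signal `s` over the
concrete interval `[lo, hi]` with predicate evaluation function `h`:
if `reach = true` it requires `∃ t ∈ [lo,hi], h (s t) ≥ 0`, and if `reach = false`
it requires `∀ t ∈ [lo,hi], h (s t) ≥ 0`. -/
def holdsAt {n : ℕ} (s : ℕ → Fin n → ℝ) (reach : Bool) (lo hi : ℕ)
    (h : (Fin n → ℝ) → ℝ) : Prop :=
  if reach then ∃ t, lo ≤ t ∧ t ≤ hi ∧ 0 ≤ h (s t)
  else ∀ t, lo ≤ t → t ≤ hi → 0 ≤ h (s t)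

lemma PrefixSTL.sat_shift {n : ℕ} (s : ℕ → Fin n → ℝ) (ψ : PrefixSTL n) :
    ∀ k t, PrefixSTL.Sat (fun t => s (k + t)) ψ t ↔ PrefixSTL.Sat s ψ (k + t) := by
  induction ψ with
  | atom h => intro k t; simp [PrefixSTL.Sat]
  | conj φ₁ φ₂ ih₁ ih₂ => intro k t; simp [PrefixSTL.Sat, ih₁, ih₂]
  | always a b hab φ ih =>
    intro k t
    simp only [PrefixSTL.Sat]
    constructor
    · intro H t' h1 h2
      have := (ih k (t' - k)).mp (H (t' - k) (by omega) (by omega))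
      rwa [Nat.add_sub_cancel' (by omega)] at this
    · intro H t' h1 h2
      exact (ih k t').mpr (H (k + t') (by omega) (by omega))

lemma STL.sat_shift {n : ℕ} (s : ℕ → Fin n → ℝ) (φ : STL n) :
    ∀ k t, STL.Sat (fun t => s (k + t)) φ t ↔ STL.Sat s φ (k + t) := by
  induction φ with
  | atom h => intro k t; simp [STL.Sat]
  | conj φ₁ φ₂ ih₁ ih₂ => intro k t; simp [STL.Sat, ih₁, ih₂]
  | ev a b hab φ ih =>
    intro k t
    simp only [STL.Sat]
    constructor
    · rintro ⟨t', h1, h2, h3⟩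
      exact ⟨k + t', by omega, by omega, (ih k t').mp h3⟩
    · rintro ⟨t', h1, h2, h3⟩
      refine ⟨t' - k, by omega, by omega, ?_⟩
      rw [ih k (t' - k), Nat.add_sub_cancel' (by omega)]; exact h3
  | always a b hab φ ih =>
    intro k t
    simp only [STL.Sat]
    constructor
    · intro H t' h1 h2
      have := (ih k (t' - k)).mp (H (t' - k) (by omega) (by omega))
      rwa [Nat.add_sub_cancel' (by omega)] at this
    · intro H t' h1 h2
      exact (ih k t').mpr (H (k + t') (by omega) (by omega))
  | untl ψ a b hab φ ih =>
    intro k t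
    simp only [STL.Sat]
    constructor
    · rintro ⟨t', h1, h2, h3, h4⟩
      refine ⟨k + t', by omega, by omega, (ih k t').mp h3, ?_⟩
      intro t'' hx hy
      have := (PrefixSTL.sat_shift s ψ k (t'' - k)).mp (h4 (t'' - k) (by omega) (by omega))
      rwa [Nat.add_sub_cancel' (by omega)] at this
    · rintro ⟨t', h1, h2, h3, h4⟩
      refine ⟨t' - k, by omega, by omega, ?_, ?_⟩
      · rw [ih k (t' - k), Nat.add_sub_cancel' (by omega)]; exact h3
      · intro t'' hx hy
        exact (PrefixSTL.sat_shift s ψ k t'').mpr (h4 (k + t'') (by omega) (by omega))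

/-- **Inductive step for an outer always operator.**
`J` is a finite index set of conditions, `F : Set Λ` a set of assignments; condition
`j` holds at shift `k` under `lam` on `s` iff
`holdsAt s (κ j) (aj j lam + k) (bj j lam + k) (hj j)`. If for every `k : ℕ` the suffix
signal `s_k` satisfies `φ` iff some `lam ∈ F` makes all conditions hold at shift `k`,
then for `a ≤ b`: `s_0 ⊨ G_{[a,b]} φ` iff there is a function `σ : [a,b] → F`
such that for every `k ∈ [a,b]` and every `j`, condition `j` holds at shift `k`
under `σ k` on `s`. -/
theorem always_inductive_step {n : ℕ} (s : ℕ → Fin n → ℝ) (φ : STL n)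
    {J Λ : Type} [Fintype J] (F : Set Λ)
    (κ : J → Bool) (aj bj : J → Λ → ℕ) (hj : J → (Fin n → ℝ) → ℝ)
    (hwin : ∀ j, ∀ lam ∈ F, aj j lam ≤ bj j lam)
    (hiff : ∀ k : ℕ,
      STL.Sat (fun t => s (k + t)) φ 0 ↔
        ∃ lam ∈ F, ∀ j, holdsAt s (κ j) (aj j lam + k) (bj j lam + k) (hj j))
    (a b : ℕ) (hab : a ≤ b) :
    STL.Sat s (STL.always a b hab φ) 0 ↔
      ∃ σ : Set.Icc a b → Λ, (∀ k, σ k ∈ F) ∧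
        ∀ k : Set.Icc a b, ∀ j,
          holdsAt s (κ j) (aj j (σ k) + (k : ℕ)) (bj j (σ k) + (k : ℕ)) (hj j) := by
  simp only [STL.Sat, Nat.zero_add]
  constructor
  · intro H
    have hch : ∀ k : Set.Icc a b, ∃ lam, lam ∈ F ∧
        ∀ j, holdsAt s (κ j) (aj j lam + (k : ℕ)) (bj j lam + (k : ℕ)) (hj j) := by
      rintro ⟨k, hk⟩
      have hs : STL.Sat s φ k := H k (by simpa using hk.1) (by simpa using hk.2)
      have := (hiff k).mp (by rw [STL.sat_shift s φ k 0]; simpa using hs)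
      simpa using this
    choose σ hσ₁ hσ₂ using hch
    exact ⟨σ, hσ₁, hσ₂⟩
  · rintro ⟨σ, hσ₁, hσ₂⟩ t' h1 h2
    have hmem : t' ∈ Set.Icc a b := ⟨by omega, by omega⟩
    have := (hiff t').mpr ⟨σ ⟨t', hmem⟩, hσ₁ _, hσ₂ ⟨t', hmem⟩⟩
    rw [STL.sat_shift s φ t' 0] at this
    simpa using this
end

section
/- Soundness and completeness of STL robustness for the positive normal form fragment: For every STL formula φ of the positive normal form fragment (with disjunction), every signal s : ℕ → ℝ^n, and every time t ∈ ℕ: the robustness value satisfies ρ(s_t, φ) ≥ 0 if and only if s_t ⊨ φ. In particular, nonnegative robustness implies satisfaction, and negative robustness implies violation. -/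
/-- STL formulas of the positive normal form fragment (with disjunction) over `ℝ^n`:
atomic predicates, conjunction, disjunction, bounded eventually, bounded always, and
bounded until. Interval bounds are naturals with `a ≤ b`. -/
inductive STLD (n : ℕ) : Type where
  | atom (h : (Fin n → ℝ) → ℝ)
  | conj (φ₁ φ₂ : STLD n)
  | disj (φ₁ φ₂ : STLD n)
  | ev (a b : ℕ) (hab : a ≤ b) (φ : STLD n)
  | always (a b : ℕ) (hab : a ≤ b) (φ : STLD n)
  | untl (φ₁ : STLD n) (a b : ℕ) (hab : a ≤ b) (φ₂ : STLD n)

/-- Boolean semantics: `STLD.Sat s φ t` means `s_t ⊨ φ`. -/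
def STLD.Sat {n : ℕ} (s : ℕ → Fin n → ℝ) : STLD n → ℕ → Prop
  | .atom h, t => 0 ≤ h (s t)
  | .conj φ₁ φ₂, t => STLD.Sat s φ₁ t ∧ STLD.Sat s φ₂ t
  | .disj φ₁ φ₂, t => STLD.Sat s φ₁ t ∨ STLD.Sat s φ₂ t
  | .ev a b _ φ, t => ∃ t', t + a ≤ t' ∧ t' ≤ t + b ∧ STLD.Sat s φ t'
  | .always a b _ φ, t => ∀ t', t + a ≤ t' → t' ≤ t + b → STLD.Sat s φ t'
  | .untl φ₁ a b _ φ₂, t => ∃ t', t + a ≤ t' ∧ t' ≤ t + b ∧ STLD.Sat s φ₂ t' ∧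
      ∀ t'', t ≤ t'' → t'' ≤ t' → STLD.Sat s φ₁ t''

/-- Quantitative semantics (robustness): `STLD.rob s φ t` is `ρ(s_t, φ)`. -/
noncomputable def STLD.rob {n : ℕ} (s : ℕ → Fin n → ℝ) : STLD n → ℕ → ℝ
  | .atom h, t => h (s t)
  | .conj φ₁ φ₂, t => min (STLD.rob s φ₁ t) (STLD.rob s φ₂ t)
  | .disj φ₁ φ₂, t => max (STLD.rob s φ₁ t) (STLD.rob s φ₂ t)
  | .ev a b hab φ, t =>
      (Finset.Icc (t + a) (t + b)).sup'
        (Finset.nonempty_Icc.mpr (by omega)) (fun t' => STLD.rob s φ t')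
  | .always a b hab φ, t =>
      (Finset.Icc (t + a) (t + b)).inf'
        (Finset.nonempty_Icc.mpr (by omega)) (fun t' => STLD.rob s φ t')
  | .untl φ₁ a b hab φ₂, t =>
      (Finset.Icc (t + a) (t + b)).attach.sup'
        (Finset.attach_nonempty_iff.mpr (Finset.nonempty_Icc.mpr (by omega)))
        (fun t' => min (STLD.rob s φ₂ t'.1)
          ((Finset.Icc t t'.1).inf'
            (Finset.nonempty_Icc.mpr
              (le_trans (Nat.le_add_right t a) (Finset.mem_Icc.mp t'.2).1))
            (fun τ => STLD.rob s φ₁ τ)))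

/-- **Soundness and completeness of STL robustness for the PNF fragment.**
For every formula `φ` of the positive normal form fragment (with disjunction), every
signal `s`, and every time `t`: `ρ(s_t, φ) ≥ 0` iff `s_t ⊨ φ`. In particular,
nonnegative robustness implies satisfaction and negative robustness implies violation. -/
theorem robustness_sound_complete {n : ℕ} (φ : STLD n) (s : ℕ → Fin n → ℝ) (t : ℕ) :
    0 ≤ STLD.rob s φ t ↔ STLD.Sat s φ t := by
  induction φ generalizing t with
  | atom h => simp [STLD.rob, STLD.Sat]
  | conj φ₁ φ₂ ih₁ ih₂ =>
    simp [STLD.rob, STLD.Sat, le_min_iff, ih₁, ih₂]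
  | disj φ₁ φ₂ ih₁ ih₂ =>
    simp [STLD.rob, STLD.Sat, le_max_iff, ih₁, ih₂]
  | ev a b hab φ ih =>
    simp only [STLD.rob, STLD.Sat, Finset.le_sup'_iff, Finset.mem_Icc]
    constructor
    · rintro ⟨t', ⟨h1, h2⟩, h3⟩; exact ⟨t', h1, h2, (ih t').mp h3⟩
    · rintro ⟨t', h1, h2, h3⟩; exact ⟨t', ⟨h1, h2⟩, (ih t').mpr h3⟩
  | always a b hab φ ih =>
    simp only [STLD.rob, STLD.Sat, Finset.le_inf'_iff, Finset.mem_Icc]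
    constructor
    · rintro h t' h1 h2; exact (ih t').mp (h t' ⟨h1, h2⟩)
    · rintro h t' ⟨h1, h2⟩; exact (ih t').mpr (h t' h1 h2)
  | untl φ₁ a b hab φ₂ ih₁ ih₂ =>
    simp only [STLD.rob, STLD.Sat, Finset.le_sup'_iff, le_min_iff,
      Finset.le_inf'_iff, Finset.mem_Icc, Finset.mem_attach]
    constructor
    · rintro ⟨⟨t', ht'⟩, -, h2, h3⟩
      rw [Finset.mem_Icc] at ht'
      exact ⟨t', ht'.1, ht'.2, (ih₂ t').mp h2,
        fun τ hτ1 hτ2 => (ih₁ τ).mp (h3 τ ⟨hτ1, hτ2⟩)⟩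
    · rintro ⟨t', h1, h2, h3, h4⟩
      exact ⟨⟨t', Finset.mem_Icc.mpr ⟨h1, h2⟩⟩, trivial,
        (ih₂ t').mpr h3, fun τ hτ => (ih₁ τ).mpr (h4 τ hτ.1 hτ.2)⟩
end
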